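/- arXiv:math/0309135 — 5 statements merged into one kernel-verified Lean document; each statement's English description precedes it below -/
import Mathlib

section
/- Let n ≥ 1 and let π be a permutation of {1, …, n+1}. Then π is Baxter if and only if for every i ∈ {1, …, n} there is exactly one j ∈ {1, …, n} such that (i,j) is a box for π. -/
/-!
Fix a row `i` and put `p d :↔ (σ d ≤ i ↔ π i < π (i+1))`. Between `lo = min (π i) (π (i+1))` and
`hi = max (π i) (π (i+1))` the predicate `p` holds at `lo`, and `(i, j)` is a box exactly when `p`
flips between `j` and `j + 1`. The Baxter condition at `i` says that `p` is a step function on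
`[lo, hi]`, i.e. that it flips exactly once.
-/

/-- `(i,j)` is a box for the permutation `π` with inverse `σ`:
`min(π i, π (i+1)) ≤ j < max(π i, π (i+1))` and `min(σ j, σ (j+1)) ≤ i < max(σ j, σ (j+1))`. -/
def IsBox (π σ : ℕ → ℕ) (i j : ℕ) : Prop :=
  min (π i) (π (i+1)) ≤ j ∧ j < max (π i) (π (i+1)) ∧
  min (σ j) (σ (j+1)) ≤ i ∧ i < max (σ j) (σ (j+1))

instance (π σ : ℕ → ℕ) (i j : ℕ) : Decidable (IsBox π σ i j) := by
  unfold IsBox; infer_instance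

/-- A box `(i,j)` is windmilled if exactly one of `π i > j` and `σ j > i` holds. -/
def Windmilled (π σ : ℕ → ℕ) (i j : ℕ) : Prop :=
  IsBox π σ i j ∧ Xor' (j < π i) (i < σ j)

instance (π σ : ℕ → ℕ) (i j : ℕ) : Decidable (Windmilled π σ i j) := by
  unfold Windmilled Xor'; infer_instance

/-- The matrix `A(π)`: `-1` on windmilled boxes, `1` on non-windmilled boxes, `0` elsewhere. -/
def AMat (π σ : ℕ → ℕ) (i j : ℕ) : ℤ :=
  if Windmilled π σ i j then -1 else if IsBox π σ i j then 1 else 0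

/-- Baxter condition (dividing-line form) for a permutation `π` of `{1, …, n+1}`
with inverse `σ`. -/
def IsBaxter (n : ℕ) (π σ : ℕ → ℕ) : Prop :=
  ∀ i ∈ Finset.Icc 1 n,
    ∃ c, min (π i) (π (i+1)) ≤ c ∧ c < max (π i) (π (i+1)) ∧
      ∀ d, min (π i) (π (i+1)) < d → d < max (π i) (π (i+1)) →
        (π i < π (i+1) → (d ≤ c → σ d < i) ∧ (c < d → σ d > i + 1)) ∧
        (π (i+1) < π i → (d ≤ c → σ d > i + 1) ∧ (c < d → σ d < i))

open Finset

theorem exists_step_iff_existsUnique_flip {p : ℕ → Prop} {lo hi : ℕ} (hlo : p lo) :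
    (∃ c, lo ≤ c ∧ c < hi ∧ ∀ d, lo ≤ d → d ≤ hi → (p d ↔ d ≤ c)) ↔
      ∃! j, lo ≤ j ∧ j < hi ∧ (p j ↔ ¬ p (j + 1)) := by
  constructor
  · rintro ⟨c, hlo_c, hc_hi, hstep⟩
    refine ⟨c, ⟨hlo_c, hc_hi, ?_⟩, ?_⟩
    · simp only [hstep c hlo_c hc_hi.le, hstep (c + 1) (by omega) (by omega)]
      omega
    · rintro j ⟨hlo_j, hj_hi, hflip⟩
      rw [hstep j hlo_j hj_hi.le, hstep (j + 1) (by omega) (by omega)] at hflip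
      omega
  · rintro ⟨c, ⟨hlo_c, hc_hi, hflip_c⟩, huniq⟩
    refine ⟨c, hlo_c, hc_hi, fun d hlo_d hd_hi => ?_⟩
    induction d, hlo_d using Nat.le_induction with
    | base => simpa [hlo_c] using hlo
    | succ d hlo_d ih =>
      rcases eq_or_ne d c with rfl | hdc
      · have hd : p d := (ih (by omega)).2 le_rfl
        simpa [hd] using hflip_c
      · have hno_flip : ¬ (p d ↔ ¬ p (d + 1)) := fun h => hdc (huniq d ⟨hlo_d, by omega, h⟩)
        rw [ih (by omega)] at hno_flip
        have : d + 1 ≤ c ↔ d ≤ c := by omega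
        tauto

def IsBaxterAt (π σ : ℕ → ℕ) (i : ℕ) : Prop :=
  ∃ c, min (π i) (π (i+1)) ≤ c ∧ c < max (π i) (π (i+1)) ∧
    ∀ d, min (π i) (π (i+1)) < d → d < max (π i) (π (i+1)) →
      (π i < π (i+1) → (d ≤ c → σ d < i) ∧ (c < d → σ d > i + 1)) ∧
      (π (i+1) < π i → (d ≤ c → σ d > i + 1) ∧ (c < d → σ d < i))

theorem isBaxter_iff_forall_isBaxterAt (n : ℕ) (π σ : ℕ → ℕ) :
    IsBaxter n π σ ↔ ∀ i ∈ Icc 1 n, IsBaxterAt π σ i :=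
  Iff.rfl

-- `a`, `b`, `s` stand for `π i`, `π (i+1)`, `σ d`, with `d` strictly between `a` and `b`.
theorem baxter_clause_iff {a b c d s i : ℕ} (hab : a ≠ b) (hs : s ≠ i) (hs' : s ≠ i + 1) :
    ((a < b → (d ≤ c → s < i) ∧ (c < d → s > i + 1)) ∧
      (b < a → (d ≤ c → s > i + 1) ∧ (c < d → s < i))) ↔ ((s ≤ i ↔ a < b) ↔ d ≤ c) := by
  omega

section Row

variable (π : Equiv.Perm ℕ) (i : ℕ)

theorem isBox_iff (j : ℕ) :
    IsBox π π.symm i j ↔ min (π i) (π (i+1)) ≤ j ∧ j < max (π i) (π (i+1)) ∧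
      (π.symm j ≤ i ↔ ¬ π.symm (j + 1) ≤ i) := by
  have : π.symm j ≠ π.symm (j + 1) := fun h => by simpa using π.symm.injective h
  unfold IsBox
  omega

theorem isBaxterAt_iff_exists_step :
    IsBaxterAt π π.symm i ↔ ∃ c, min (π i) (π (i+1)) ≤ c ∧ c < max (π i) (π (i+1)) ∧
      ∀ d, min (π i) (π (i+1)) ≤ d → d ≤ max (π i) (π (i+1)) →
        ((π.symm d ≤ i ↔ π i < π (i+1)) ↔ d ≤ c) := by
  have hne : π i ≠ π (i + 1) := π.injective.ne (Nat.lt_succ_self i).ne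
  have hsymm_i : π.symm (π i) = i := π.symm_apply_apply i
  have hsymm_succ : π.symm (π (i + 1)) = i + 1 := π.symm_apply_apply (i + 1)
  refine exists_congr fun c => and_congr_right fun hlo_c => and_congr_right fun hc_hi => ?_
  constructor
  · intro h d hlo_d hd_hi
    by_cases hd : d = π i
    · subst hd; omega
    by_cases hd' : d = π (i + 1)
    · subst hd'; omega
    exact (baxter_clause_iff hne (π.symm_apply_eq.not.2 hd) (π.symm_apply_eq.not.2 hd')).1
      (h d (by omega) (by omega))
  · intro h d hlo_d hd_hi
    have hd : d ≠ π i := by omega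
    have hd' : d ≠ π (i + 1) := by omega
    exact (baxter_clause_iff hne (π.symm_apply_eq.not.2 hd) (π.symm_apply_eq.not.2 hd')).2
      (h d hlo_d.le hd_hi.le)

theorem isBaxterAt_iff_existsUnique_isBox :
    IsBaxterAt π π.symm i ↔ ∃! j, IsBox π π.symm i j := by
  have hlo : π.symm (min (π i) (π (i+1))) ≤ i ↔ π i < π (i+1) := by
    have hne : π i ≠ π (i + 1) := π.injective.ne (Nat.lt_succ_self i).ne
    rcases hne.lt_or_gt with hlt | hgt
    · simp [min_eq_left hlt.le, hlt]
    · simp [min_eq_right hgt.le, hgt.not_gt]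
  rw [isBaxterAt_iff_exists_step, exists_step_iff_existsUnique_flip hlo]
  refine existsUnique_congr fun j => ?_
  rw [isBox_iff]
  tauto

end Row

theorem stmt0_general (n : ℕ) (π : Equiv.Perm ℕ)
    (hπ : ∀ k ∈ Finset.Icc 1 (n+1), π k ∈ Finset.Icc 1 (n+1)) :
    IsBaxter n (⇑π) (⇑π.symm) ↔
      ∀ i ∈ Finset.Icc 1 n, ∃! j, j ∈ Finset.Icc 1 n ∧ IsBox (⇑π) (⇑π.symm) i j := by
  rw [isBaxter_iff_forall_isBaxterAt]
  refine forall₂_congr fun i hi => ?_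
  have hπi := hπ i (by simp only [mem_Icc] at hi ⊢; omega)
  have hπsucc := hπ (i + 1) (by simp only [mem_Icc] at hi ⊢; omega)
  simp only [mem_Icc] at hπi hπsucc
  have hbox_mem : ∀ j, IsBox π π.symm i j → j ∈ Icc 1 n := fun j hj => by
    rw [isBox_iff] at hj
    simp only [mem_Icc]
    omega
  rw [isBaxterAt_iff_existsUnique_isBox]
  exact existsUnique_congr fun j => ⟨fun hj => ⟨hbox_mem j hj, hj⟩, And.right⟩

theorem stmt0 (n : ℕ) (hn : 1 ≤ n) (π : Equiv.Perm ℕ)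
    (hπ : ∀ k ∈ Finset.Icc 1 (n+1), π k ∈ Finset.Icc 1 (n+1)) :
    IsBaxter n (⇑π) (⇑π.symm) ↔
      ∀ i ∈ Finset.Icc 1 n, ∃! j, j ∈ Finset.Icc 1 n ∧ IsBox (⇑π) (⇑π.symm) i j :=
  stmt0_general n π hπ
end

section
/- Let n ≥ 1 and let π be a permutation of {1, …, n+1}. Then the matrix A(π) is an alternating sign matrix: in each of its rows and each of its columns, the nonzero entries alternate in sign and sum to 1. -/
/-- A line (row or column) of an order-`n` alternating sign matrix, entries indexed by
`{1, …, n}`: entries lie in `{-1, 0, 1}`, sum to `1`, and consecutive nonzero entries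
alternate in sign. -/
def AltLine (n : ℕ) (v : ℕ → ℤ) : Prop :=
  (∀ j ∈ Finset.Icc 1 n, v j = -1 ∨ v j = 0 ∨ v j = 1) ∧
  (∑ j ∈ Finset.Icc 1 n, v j) = 1 ∧
  ∀ j₁ ∈ Finset.Icc 1 n, ∀ j₂ ∈ Finset.Icc 1 n, j₁ < j₂ → v j₁ ≠ 0 → v j₂ ≠ 0 →
    (∀ k ∈ Finset.Icc 1 n, j₁ < k → k < j₂ → v k = 0) → v j₂ = -v j₁

/-! On row `i` put `a = π i` and `b = π (i+1)`. The boxes of the row lie in `[min a b, max a b)`,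
and there `A i j = f (j+1) - f j`, where `f j ∈ {0, 1}` records on which side of `i` the value
`σ j` lies, oriented so that `f (min a b) = 0` and `f (max a b) = 1` (recall `σ a = i`,
`σ b = i + 1`). Hence the row telescopes to `1`, and `f` is constant between two consecutive
nonzero entries, so the successive jumps of the `0/1`-valued `f` alternate in sign. Columns are the
rows of `σ`, because the definition of `A` is symmetric under `(π, σ, i, j) ↦ (σ, π, j, i)`. -/

lemma altLine_of_telescoping {n m M : ℕ} (f : ℕ → ℤ) (hf : ∀ j, f j = 0 ∨ f j = 1)
    (hm : 1 ≤ m) (hmM : m ≤ M) (hM : M ≤ n + 1) (hjump : f M - f m = 1) :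
    AltLine n (fun j => if m ≤ j ∧ j < M then f (j + 1) - f j else 0) := by
  set v : ℕ → ℤ := fun j => if m ≤ j ∧ j < M then f (j + 1) - f j else 0
  have sum_v {k l : ℕ} (hk : m ≤ k) (hkl : k ≤ l) (hl : l ≤ M) :
      ∑ j ∈ Finset.Ico k l, v j = f l - f k := by
    rw [← Finset.sum_Ico_sub f hkl]
    refine Finset.sum_congr rfl fun j hj => if_pos ?_
    rw [Finset.mem_Ico] at hj
    omega
  have v_eq_zero {j : ℕ} (hj : ¬(m ≤ j ∧ j < M)) : v j = 0 := if_neg hj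
  refine ⟨fun j _ => ?_, ?_, ?_⟩
  · simp only [v]
    split_ifs <;> rcases hf j with h | h <;> rcases hf (j + 1) with h' | h' <;> omega
  · have hsub : Finset.Ico m M ⊆ Finset.Icc 1 n := fun j hj => by
      simp only [Finset.mem_Ico, Finset.mem_Icc] at hj ⊢
      omega
    rw [← Finset.sum_subset hsub fun j _ hj => v_eq_zero (by rwa [Finset.mem_Ico] at hj),
      sum_v le_rfl hmM le_rfl, hjump]
  · intro j₁ _ j₂ _ hlt h₁ h₂ hzero
    have hj₁ : m ≤ j₁ ∧ j₁ < M := by_contra fun h => h₁ (v_eq_zero h)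
    have hj₂ : m ≤ j₂ ∧ j₂ < M := by_contra fun h => h₂ (v_eq_zero h)
    have hconst : f j₂ - f (j₁ + 1) = 0 := by
      rw [← sum_v (by omega) hlt (by omega)]
      exact Finset.sum_eq_zero fun k hk => by
        rw [Finset.mem_Ico] at hk
        exact hzero k (Finset.mem_Icc.mpr (by omega)) (by omega) hk.2
    simp only [v, if_pos hj₁, if_pos hj₂] at h₁ h₂ ⊢
    rcases hf j₁ with h | h <;> rcases hf (j₁ + 1) with h' | h' <;>
      rcases hf (j₂ + 1) with h'' | h'' <;> omega

lemma windmilled_iff {π σ : ℕ → ℕ} {i j : ℕ} :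
    Windmilled π σ i j ↔ IsBox π σ i j ∧ (j < π i ↔ σ j ≤ i) :=
  and_congr_right fun _ => xor_iff_iff_not.trans (by rw [not_lt])

lemma AMat_eq_of_lt {π σ : ℕ → ℕ} {i : ℕ} (h : π i < π (i + 1)) (j : ℕ) :
    AMat π σ i j = if π i ≤ j ∧ j < π (i + 1) then
      (if i < σ (j + 1) then 1 else 0) - (if i < σ j then 1 else 0) else 0 := by
  simp only [AMat, windmilled_iff, IsBox]
  split_ifs <;> omega

lemma AMat_eq_of_gt {π σ : ℕ → ℕ} {i : ℕ} (h : π (i + 1) < π i) (j : ℕ) :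
    AMat π σ i j = if π (i + 1) ≤ j ∧ j < π i then
      (if σ (j + 1) ≤ i then 1 else 0) - (if σ j ≤ i then 1 else 0) else 0 := by
  simp only [AMat, windmilled_iff, IsBox]
  split_ifs <;> omega

lemma AMat_swap (π σ : ℕ → ℕ) (i j : ℕ) : AMat π σ i j = AMat σ π j i := by
  simp only [AMat, windmilled_iff, IsBox]
  split_ifs <;> omega

lemma altLine_AMat_row {n i : ℕ} {π σ : ℕ → ℕ}
    (hπi : π i ∈ Finset.Icc 1 (n + 1)) (hπi' : π (i + 1) ∈ Finset.Icc 1 (n + 1))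
    (hσ : σ (π i) = i) (hσ' : σ (π (i + 1)) = i + 1) :
    AltLine n (fun j => AMat π σ i j) := by
  rw [Finset.mem_Icc] at hπi hπi'
  have hne : π i ≠ π (i + 1) := fun h => by rw [h] at hσ; omega
  rcases hne.lt_or_gt with h | h
  · simp_rw [AMat_eq_of_lt h]
    refine altLine_of_telescoping (fun j => if i < σ j then 1 else 0)
      (fun j => by split_ifs <;> simp) (by omega) h.le (by omega) ?_
    simp [hσ, hσ']
  · simp_rw [AMat_eq_of_gt h]
    refine altLine_of_telescoping (fun j => if σ j ≤ i then 1 else 0)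
      (fun j => by split_ifs <;> simp) (by omega) h.le (by omega) ?_
    simp [hσ, hσ']

theorem stmt5_general (n : ℕ) (π : Equiv.Perm ℕ)
    (hπ : ∀ k ∈ Finset.Icc 1 (n+1), π k ∈ Finset.Icc 1 (n+1)) :
    (∀ i ∈ Finset.Icc 1 n, AltLine n (fun j => AMat (⇑π) (⇑π.symm) i j)) ∧
    (∀ j ∈ Finset.Icc 1 n, AltLine n (fun i => AMat (⇑π) (⇑π.symm) i j)) := by
  have hmem {k : ℕ} (hk : k ∈ Finset.Icc 1 n) :
      k ∈ Finset.Icc 1 (n + 1) ∧ k + 1 ∈ Finset.Icc 1 (n + 1) := by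
    simp only [Finset.mem_Icc] at hk ⊢
    omega
  have hbij : Set.BijOn π (Finset.Icc 1 (n + 1)) (Finset.Icc 1 (n + 1)) :=
    ((Finset.Icc 1 (n + 1)).finite_toSet.injOn_iff_bijOn_of_mapsTo hπ).mp π.injective.injOn
  have hσ : Set.MapsTo π.symm (Finset.Icc 1 (n + 1)) (Finset.Icc 1 (n + 1)) :=
    (π.bijOn_symm.mpr hbij).mapsTo
  refine ⟨fun i hi => ?_, fun j hj => ?_⟩
  · exact altLine_AMat_row (hπ _ (hmem hi).1) (hπ _ (hmem hi).2) (by simp) (by simp)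
  · simp_rw [AMat_swap π]
    exact altLine_AMat_row (hσ (hmem hj).1) (hσ (hmem hj).2) (by simp) (by simp)

theorem stmt5 (n : ℕ) (hn : 1 ≤ n) (π : Equiv.Perm ℕ)
    (hπ : ∀ k ∈ Finset.Icc 1 (n+1), π k ∈ Finset.Icc 1 (n+1)) :
    (∀ i ∈ Finset.Icc 1 n, AltLine n (fun j => AMat (⇑π) (⇑π.symm) i j)) ∧
    (∀ j ∈ Finset.Icc 1 n, AltLine n (fun i => AMat (⇑π) (⇑π.symm) i j)) :=
  stmt5_general n π hπ
end

section
/- Let n ≥ 1, let π be a permutation of {1, …, n+1}, and fix j ∈ {1, …, n}. Let i_1 < i_2 < … < i_r be the complete list of indices i such that (i,j) is a box for π. Then for each t ∈ {1, …, r}, the box (i_t,j) is windmilled if and only if t is even. In particular r is odd and the first and last boxes in column j are non-windmilled. -/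
section ChangePoints

variable (P : ℕ → Prop) [DecidablePred P]

def changePoints (lo k : ℕ) : List ℕ :=
  (List.range' lo k).filter fun i => ¬(P i ↔ P (i + 1))

lemma mem_changePoints {lo k i : ℕ} :
    i ∈ changePoints P lo k ↔ (lo ≤ i ∧ i < lo + k) ∧ ¬(P i ↔ P (i + 1)) := by
  simp [changePoints, List.mem_range'_1]

lemma pairwise_lt_changePoints (lo k : ℕ) : (changePoints P lo k).Pairwise (· < ·) :=
  (List.pairwise_lt_range' (s := lo) (n := k)).filter _

lemma changePoints_succ (lo k : ℕ) :
    changePoints P lo (k + 1) =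
      changePoints P lo k ++ if P (lo + k) ↔ P (lo + k + 1) then [] else [lo + k] := by
  rw [changePoints, List.range'_concat, List.filter_append]
  split_ifs with h <;> simp [h, changePoints]

lemma even_length_changePoints_iff (lo k : ℕ) :
    Even (changePoints P lo k).length ↔ (P lo ↔ P (lo + k)) := by
  induction k with
  | zero => simp [changePoints]
  | succ k ih =>
    rw [changePoints_succ, ← add_assoc]
    split_ifs with h
    · simp only [List.append_nil, ih]
      tauto
    · simp only [List.length_append, List.length_singleton, Nat.even_add_one, ih]
      tauto

lemma apply_getElem_changePoints_iff {lo k t : ℕ} (ht : t < (changePoints P lo k).length) :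
    P (changePoints P lo k)[t] ↔ (P lo ↔ Even t) := by
  induction k with
  | zero => simp [changePoints] at ht
  | succ k ih =>
    simp only [changePoints_succ] at ht ⊢
    split_ifs at ht ⊢ with h
    · simp only [List.append_nil] at ht ⊢
      exact ih ht
    · rw [List.length_append, List.length_singleton, Nat.lt_succ_iff_lt_or_eq] at ht
      rcases ht with ht | rfl
      · rw [List.getElem_append_left ht]
        exact ih ht
      · rw [List.getElem_concat_length rfl]
        have := even_length_changePoints_iff P lo k
        tauto

lemma sort_eq_changePoints {s : Finset ℕ} {lo k : ℕ}
    (hs : ∀ i, i ∈ s ↔ i ∈ changePoints P lo k) :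
    s.sort (· ≤ ·) = changePoints P lo k := by
  have hnodup := (pairwise_lt_changePoints P lo k).imp ne_of_lt
  have : s = (changePoints P lo k).toFinset := by
    ext i
    simp [hs]
  rw [this, List.toFinset_sort _ hnodup]
  exact (pairwise_lt_changePoints P lo k).imp le_of_lt

end ChangePoints

section Column

variable (π : Equiv.Perm ℕ) (j : ℕ)

def columnBoxes : List ℕ :=
  changePoints (fun i => j < π i) (min (π.symm j) (π.symm (j + 1)))
    (max (π.symm j) (π.symm (j + 1)) - min (π.symm j) (π.symm (j + 1)))

lemma mem_columnBoxes_iff {i : ℕ} : i ∈ columnBoxes π j ↔ IsBox π π.symm i j := by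
  rw [columnBoxes, mem_changePoints, IsBox]
  omega

lemma lt_apply_min_symm_iff :
    j < π (min (π.symm j) (π.symm (j + 1))) ↔ π.symm (j + 1) < π.symm j := by
  rcases lt_trichotomy (π.symm j) (π.symm (j + 1)) with h | h | h
  · simp [min_eq_left h.le, h.not_gt]
  · simp at h
  · simp [min_eq_right h.le, h]

lemma lt_apply_max_symm_iff :
    j < π (max (π.symm j) (π.symm (j + 1))) ↔ π.symm j < π.symm (j + 1) := by
  rcases lt_trichotomy (π.symm j) (π.symm (j + 1)) with h | h | h
  · simp [max_eq_right h.le, h]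
  · simp at h
  · simp [max_eq_left h.le, h.not_gt]

lemma windmilled_iff_of_isBox {i : ℕ} (h : IsBox π π.symm i j) :
    Windmilled π π.symm i j ↔ (j < π i ↔ π.symm j < π.symm (j + 1)) := by
  rw [Windmilled, Xor', xor_iff_not_iff, and_iff_right h]
  rw [IsBox] at h
  omega

lemma odd_length_columnBoxes : Odd (columnBoxes π j).length := by
  have : π.symm j ≠ π.symm (j + 1) := by simp
  rw [← Nat.not_even_iff_odd, columnBoxes, even_length_changePoints_iff,
    Nat.add_sub_cancel' min_le_max, lt_apply_min_symm_iff, lt_apply_max_symm_iff]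
  omega

lemma windmilled_getElem_columnBoxes_iff {t : ℕ} (ht : t < (columnBoxes π j).length) :
    Windmilled π π.symm (columnBoxes π j)[t] j ↔ Odd t := by
  have hne : π.symm j ≠ π.symm (j + 1) := by simp
  have hP : j < π (columnBoxes π j)[t] ↔ (π.symm (j + 1) < π.symm j ↔ Even t) := by
    rw [← lt_apply_min_symm_iff]
    exact apply_getElem_changePoints_iff _ ht
  rw [windmilled_iff_of_isBox _ _ ((mem_columnBoxes_iff π j).mp (List.getElem_mem ht)), hP,
    ← Nat.not_even_iff_odd]
  rcases hne.lt_or_gt with h | h <;> simp [h, h.not_gt]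

lemma sort_isBox_eq_columnBoxes {n : ℕ}
    (hπ : ∀ k ∈ Finset.Icc 1 (n + 1), π k ∈ Finset.Icc 1 (n + 1)) (hj : j ∈ Finset.Icc 1 n) :
    ((Finset.Icc 1 n).filter (fun i => IsBox π π.symm i j)).sort (· ≤ ·) = columnBoxes π j := by
  rw [Finset.mem_Icc] at hj
  have hσ (m : ℕ) (hm : 1 ≤ m ∧ m ≤ n + 1) : 1 ≤ π.symm m ∧ π.symm m ≤ n + 1 :=
    Finset.mem_Icc.mp (Equiv.Perm.perm_symm_on_of_perm_on_finset hπ (Finset.mem_Icc.mpr hm))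
  have ha := hσ j (by omega)
  have hb := hσ (j + 1) (by omega)
  refine sort_eq_changePoints _ fun i => ?_
  rw [Finset.mem_filter, ← columnBoxes, mem_columnBoxes_iff, Finset.mem_Icc, IsBox]
  omega

end Column

theorem stmt7_general (n : ℕ) (π : Equiv.Perm ℕ)
    (hπ : ∀ k ∈ Finset.Icc 1 (n+1), π k ∈ Finset.Icc 1 (n+1))
    (j : ℕ) (hj : j ∈ Finset.Icc 1 n)
    (l : List ℕ)
    (hl : l = ((Finset.Icc 1 n).filter (fun i => IsBox (⇑π) (⇑π.symm) i j)).sort (· ≤ ·)) :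
    (∀ t (ht : t < l.length), (Windmilled (⇑π) (⇑π.symm) (l.get ⟨t, ht⟩) j ↔ Odd t)) ∧
    Odd l.length ∧
    (∀ i, l.head? = some i → ¬ Windmilled (⇑π) (⇑π.symm) i j) ∧
    (∀ i, l.getLast? = some i → ¬ Windmilled (⇑π) (⇑π.symm) i j) := by
  rw [sort_isBox_eq_columnBoxes π j hπ hj] at hl
  subst hl
  have hwind : ∀ t (ht : t < (columnBoxes π j).length),
      Windmilled π π.symm (columnBoxes π j)[t] j ↔ Odd t :=
    fun _ ht => windmilled_getElem_columnBoxes_iff π j ht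
  have hodd := odd_length_columnBoxes π j
  have hpos : 0 < (columnBoxes π j).length := hodd.pos
  refine ⟨hwind, hodd, fun i hi => ?_, fun i hi => ?_⟩
  · rw [List.head?_eq_getElem?, List.getElem?_eq_getElem hpos, Option.some_inj] at hi
    rw [← hi, hwind]
    exact Nat.not_odd_zero
  · rw [List.getLast?_eq_getElem?, List.getElem?_eq_getElem (Nat.sub_lt hpos one_pos),
      Option.some_inj] at hi
    rw [← hi, hwind, Nat.not_odd_iff_even]
    exact Nat.Odd.sub_odd hodd odd_one

theorem stmt7 (n : ℕ) (hn : 1 ≤ n) (π : Equiv.Perm ℕ)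
    (hπ : ∀ k ∈ Finset.Icc 1 (n+1), π k ∈ Finset.Icc 1 (n+1))
    (j : ℕ) (hj : j ∈ Finset.Icc 1 n)
    (l : List ℕ)
    (hl : l = ((Finset.Icc 1 n).filter (fun i => IsBox (⇑π) (⇑π.symm) i j)).sort (· ≤ ·)) :
    (∀ t (ht : t < l.length), (Windmilled (⇑π) (⇑π.symm) (l.get ⟨t, ht⟩) j ↔ Odd t)) ∧
    Odd l.length ∧
    (∀ i, l.head? = some i → ¬ Windmilled (⇑π) (⇑π.symm) i j) ∧
    (∀ i, l.getLast? = some i → ¬ Windmilled (⇑π) (⇑π.symm) i j) :=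
  stmt7_general n π hπ j hj l hl
end

section
/- Let n ≥ 1 and let π be a permutation of {1, …, n+1} that is not Baxter. Then there exist i, j ∈ {1, …, n} such that (i,j) is a windmilled box for π; equivalently, the matrix A(π) contains at least one entry equal to −1. -/
/-
If the Baxter condition fails at position `i`, say with `π i < π (i+1)`, then the values strictly
between `π i` and `π (i+1)` do not split into an initial block placed before position `i` and a
final block placed after `i + 1`. Each such value sits on one side of the pair `i, i+1`, so some
two consecutive values `j < j + 1` in that range have `σ j > i + 1` and `σ (j+1) < i`; the box
`(i, j)` is then windmilled. The case `π i > π (i+1)` is symmetric.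
-/

theorem exists_threshold_or_exists_ascent (P : ℕ → Prop) {lo hi : ℕ} (h : lo < hi) :
    (∃ c, lo ≤ c ∧ c < hi ∧ ∀ d, lo < d → d < hi → (d ≤ c ↔ P d)) ∨
      ∃ j, lo < j ∧ j + 1 < hi ∧ ¬ P j ∧ P (j + 1) := by
  induction hi, h using Nat.le_induction with
  | base => exact .inl ⟨lo, le_rfl, lo.lt_succ_self, fun d h₁ h₂ => absurd h₂ (by omega)⟩
  | succ hi hlo ih =>
    rcases ih with ⟨c, hlc, hch, hc⟩ | ⟨j, hj, hjh, hPj, hPj'⟩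
    · by_cases hP : P hi
      · rcases (Nat.le_sub_one_of_lt hch).eq_or_lt with rfl | hc'
        · refine .inl ⟨hi, by omega, hi.lt_succ_self, fun d h₁ h₂ => ?_⟩
          rcases (Nat.lt_succ_iff.mp h₂).lt_or_eq with h₂ | rfl
          · exact iff_of_true h₂.le ((hc d h₁ h₂).mp (by omega))
          · exact iff_of_true le_rfl hP
        · refine .inr ⟨hi - 1, by omega, by omega, fun hP' => ?_, ?_⟩
          · exact absurd ((hc _ (by omega) (by omega)).mpr hP') (by omega)
          · rwa [Nat.sub_add_cancel (by omega)]
      · refine .inl ⟨c, hlc, by omega, fun d h₁ h₂ => ?_⟩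
        rcases (Nat.lt_succ_iff.mp h₂).lt_or_eq with h₂ | rfl
        · exact hc d h₁ h₂
        · exact iff_of_false (by omega) hP
    · exact .inr ⟨j, hj, by omega, hPj, hPj'⟩

def BaxterAt (π σ : ℕ → ℕ) (i : ℕ) : Prop :=
  ∃ c, min (π i) (π (i+1)) ≤ c ∧ c < max (π i) (π (i+1)) ∧
    ∀ d, min (π i) (π (i+1)) < d → d < max (π i) (π (i+1)) →
      (π i < π (i+1) → (d ≤ c → σ d < i) ∧ (c < d → σ d > i + 1)) ∧
      (π (i+1) < π i → (d ≤ c → σ d > i + 1) ∧ (c < d → σ d < i))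

section

variable {π σ : ℕ → ℕ} {i : ℕ}

theorem Windmilled.of_lt {j : ℕ} (hj : π i < j) (hj' : j < π (i+1))
    (hσj : i + 1 < σ j) (hσj' : σ (j+1) < i) : Windmilled π σ i j :=
  ⟨⟨by omega, by omega, by omega, by omega⟩, .inr ⟨by omega, by omega⟩⟩

theorem Windmilled.of_gt {j : ℕ} (hj : π (i+1) ≤ j) (hj' : j < π i)
    (hσj : σ j < i) (hσj' : i + 1 < σ (j+1)) : Windmilled π σ i j :=
  ⟨⟨by omega, by omega, by omega, by omega⟩, .inl ⟨hj', by omega⟩⟩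

theorem exists_windmilled_of_not_baxterAt (hne : π i ≠ π (i+1))
    (hsep : ∀ d, min (π i) (π (i+1)) < d → d < max (π i) (π (i+1)) → σ d < i ∨ i + 1 < σ d)
    (h : ¬ BaxterAt π σ i) :
    ∃ j, min (π i) (π (i+1)) < j ∧ j + 1 < max (π i) (π (i+1)) ∧ Windmilled π σ i j := by
  rcases hne.lt_or_gt with hab | hab
  · simp only [BaxterAt, min_eq_left hab.le, max_eq_right hab.le] at h hsep ⊢
    rcases exists_threshold_or_exists_ascent (fun d => σ d < i) hab with
      ⟨c, hac, hcb, hc⟩ | ⟨j, haj, hjb, hσj, hσj'⟩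
    · refine absurd ⟨c, hac, hcb, fun d had hdb => ⟨fun _ => ⟨(hc d had hdb).mp, fun hcd => ?_⟩,
        fun hba => absurd hba hab.not_gt⟩⟩ h
      exact (hsep d had hdb).resolve_left (mt (hc d had hdb).mpr (by omega))
    · have hσj_side := hsep j haj (by omega)
      exact ⟨j, haj, hjb, .of_lt haj (by omega) (by omega) hσj'⟩
  · simp only [BaxterAt, min_eq_right hab.le, max_eq_left hab.le] at h hsep ⊢
    rcases exists_threshold_or_exists_ascent (fun d => i + 1 < σ d) hab with
      ⟨c, hbc, hca, hc⟩ | ⟨j, hbj, hja, hσj, hσj'⟩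
    · refine absurd ⟨c, hbc, hca, fun d hbd hda => ⟨fun hab' => absurd hab' hab.not_gt,
        fun _ => ⟨(hc d hbd hda).mp, fun hcd => ?_⟩⟩⟩ h
      exact (hsep d hbd hda).resolve_right (mt (hc d hbd hda).mpr (by omega))
    · have hσj_side := hsep j hbj (by omega)
      exact ⟨j, hbj, hja, .of_gt hbj.le (by omega) (by omega) hσj'⟩

end

theorem Equiv.Perm.exists_windmilled_of_not_baxterAt {n i : ℕ} (π : Equiv.Perm ℕ)
    (hπ : ∀ k ∈ Finset.Icc 1 (n+1), π k ∈ Finset.Icc 1 (n+1)) (hi : i ∈ Finset.Icc 1 n)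
    (h : ¬ BaxterAt π π.symm i) : ∃ j ∈ Finset.Icc 1 n, Windmilled π π.symm i j := by
  rw [Finset.mem_Icc] at hi
  have ha := Finset.mem_Icc.mp (hπ i (Finset.mem_Icc.mpr ⟨hi.1, by omega⟩))
  have hb := Finset.mem_Icc.mp (hπ (i+1) (Finset.mem_Icc.mpr ⟨by omega, by omega⟩))
  have hsep : ∀ d, min (π i) (π (i+1)) < d → d < max (π i) (π (i+1)) →
      π.symm d < i ∨ i + 1 < π.symm d := by
    intro d hd hd'
    have hdi : π.symm d ≠ i := fun he => by rw [π.symm_apply_eq] at he; omega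
    have hdi' : π.symm d ≠ i + 1 := fun he => by rw [π.symm_apply_eq] at he; omega
    omega
  obtain ⟨j, hj, hj', hw⟩ :=
    _root_.exists_windmilled_of_not_baxterAt (π.injective.ne (by omega)) hsep h
  exact ⟨j, Finset.mem_Icc.mpr ⟨by omega, by omega⟩, hw⟩

theorem stmt9_general (n : ℕ) (π : Equiv.Perm ℕ)
    (hπ : ∀ k ∈ Finset.Icc 1 (n+1), π k ∈ Finset.Icc 1 (n+1))
    (hbax : ¬ IsBaxter n (⇑π) (⇑π.symm)) :
    (∃ i ∈ Finset.Icc 1 n, ∃ j ∈ Finset.Icc 1 n, Windmilled (⇑π) (⇑π.symm) i j) ∧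
    (∃ i ∈ Finset.Icc 1 n, ∃ j ∈ Finset.Icc 1 n, AMat (⇑π) (⇑π.symm) i j = -1) := by
  obtain ⟨i, hi, hfail⟩ : ∃ i ∈ Finset.Icc 1 n, ¬ BaxterAt π π.symm i := by
    by_contra! h
    exact hbax h
  obtain ⟨j, hj, hw⟩ := Equiv.Perm.exists_windmilled_of_not_baxterAt π hπ hi hfail
  exact ⟨⟨i, hi, j, hj, hw⟩, ⟨i, hi, j, hj, if_pos hw⟩⟩

theorem stmt9 (n : ℕ) (hn : 1 ≤ n) (π : Equiv.Perm ℕ)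
    (hπ : ∀ k ∈ Finset.Icc 1 (n+1), π k ∈ Finset.Icc 1 (n+1))
    (hbax : ¬ IsBaxter n (⇑π) (⇑π.symm)) :
    (∃ i ∈ Finset.Icc 1 n, ∃ j ∈ Finset.Icc 1 n, Windmilled (⇑π) (⇑π.symm) i j) ∧
    (∃ i ∈ Finset.Icc 1 n, ∃ j ∈ Finset.Icc 1 n, AMat (⇑π) (⇑π.symm) i j = -1) :=
  stmt9_general n π hπ hbax
end

section
/- Let n ≥ 1, let π be a permutation of {1, …, n+1} with inverse σ, and fix i ∈ {1, …, n}. Set a = π(i) and b = π(i+1). Then the following are equivalent: (1) there exists c with min(a,b) ≤ c < max(a,b) such that for every d with min(a,b) < d < max(a,b): when a < b, d ≤ c implies σ(d) < i and d > c implies σ(d) > i+1, and when a > b, d ≤ c implies σ(d) > i+1 and d > c implies σ(d) < i; (2) there is exactly one j ∈ {1, …, n} such that (i,j) is a box for π. -/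
/-!
Put `σ = π⁻¹`, `a = π i`, `b = π (i+1)`, say `a < b`, and colour each value `d ∈ [a, b]` by whether
`σ d ≤ i`; the colour is true at `a` (where `σ a = i`) and false at `b`. A box `(i, j)` is exactly a
colour change between `j` and `j + 1`, and since `σ` takes neither `i` nor `i + 1` strictly between
`a` and `b`, condition (1) says that the colour drops exactly once. A colouring that starts true and
ends false changes colour exactly once iff it is true up to a cut and false after it. The case
`a > b` is the same with the colour `i < σ d`.
-/

open Function

theorem exists_flip_of_le {s : ℕ → Prop} {a b : ℕ} (hab : a ≤ b) (ha : s a) (hb : ¬ s b) :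
    ∃ j, a ≤ j ∧ j < b ∧ s j ∧ ¬ s (j + 1) := by
  induction b, hab using Nat.le_induction with
  | base => exact absurd ha hb
  | succ b hab ih =>
    by_cases hsb : s b
    · exact ⟨b, hab, b.lt_succ_self, hsb, hb⟩
    · obtain ⟨j, haj, hjb, hj⟩ := ih hsb
      exact ⟨j, haj, by omega, hj⟩

theorem exists_cut_iff_existsUnique_flip (s : ℕ → Prop) {m M : ℕ} (hm : s m) (hM : ¬ s M) :
    (∃ c, m ≤ c ∧ c < M ∧ ∀ d, m < d → d < M → (d ≤ c → s d) ∧ (c < d → ¬ s d)) ↔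
      ∃! j, m ≤ j ∧ j < M ∧ Xor (s j) (s (j + 1)) := by
  constructor
  · rintro ⟨c, hmc, hcM, hcut⟩
    have hs : ∀ d, m ≤ d → d ≤ M → (s d ↔ d ≤ c) := by
      intro d hmd hdM
      rcases hmd.eq_or_lt with rfl | hmd
      · exact iff_of_true hm hmc
      rcases hdM.eq_or_lt with rfl | hdM
      · exact iff_of_false hM hcM.not_ge
      by_cases hdc : d ≤ c
      · exact iff_of_true ((hcut d hmd hdM).1 hdc) hdc
      · exact iff_of_false ((hcut d hmd hdM).2 (by omega)) hdc
    refine ⟨c, ⟨hmc, hcM, ?_⟩, ?_⟩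
    · rw [hs c hmc hcM.le, hs (c + 1) (by omega) hcM]
      exact Or.inl ⟨le_rfl, by omega⟩
    · rintro j ⟨hmj, hjM, hflip⟩
      rw [hs j hmj hjM.le, hs (j + 1) (by omega) hjM] at hflip
      unfold Xor at hflip
      omega
  · rintro ⟨c, ⟨hmc, hcM, -⟩, huniq⟩
    refine ⟨c, hmc, hcM, fun d hmd hdM => ⟨fun hdc => ?_, fun hcd hsd => ?_⟩⟩
    · by_contra hsd
      obtain ⟨j, hmj, hjd, hj, hj1⟩ := exists_flip_of_le hmd.le hm hsd
      have := huniq j ⟨hmj, by omega, Or.inl ⟨hj, hj1⟩⟩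
      omega
    · obtain ⟨j, hdj, hjM, hj, hj1⟩ := exists_flip_of_le hdM.le hsd hM
      have := huniq j ⟨by omega, hjM, Or.inl ⟨hj, hj1⟩⟩
      omega

theorem min_le_and_lt_max_iff_xor {α : Type*} [LinearOrder α] (a b x : α) :
    min a b ≤ x ∧ x < max a b ↔ Xor (a ≤ x) (b ≤ x) := by
  simp only [min_le_iff, max_le_iff, ← not_le, Xor]
  tauto

section Crossing

variable {σ : ℕ → ℕ} (hσ : Injective σ) {i m M : ℕ}
include hσ

theorem exists_cut_iff_existsUnique_crossing_of_up (hm : σ m = i) (hM : σ M = i + 1) :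
    (∃ c, m ≤ c ∧ c < M ∧ ∀ d, m < d → d < M →
        (d ≤ c → σ d < i) ∧ (c < d → σ d > i + 1)) ↔
      ∃! j, m ≤ j ∧ j < M ∧ min (σ j) (σ (j + 1)) ≤ i ∧ i < max (σ j) (σ (j + 1)) := by
  simp only [min_le_and_lt_max_iff_xor]
  rw [← exists_cut_iff_existsUnique_flip (fun d => σ d ≤ i) hm.le (by omega)]
  refine exists_congr fun c => and_congr_right fun _ => and_congr_right fun _ =>
    forall_congr' fun d => forall_congr' fun hmd => forall_congr' fun hdM => ?_
  have hdm : σ d ≠ i := hm ▸ hσ.ne hmd.ne'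
  have hdM : σ d ≠ i + 1 := hM ▸ hσ.ne hdM.ne
  omega

theorem exists_cut_iff_existsUnique_crossing_of_down (hm : σ m = i + 1) (hM : σ M = i) :
    (∃ c, m ≤ c ∧ c < M ∧ ∀ d, m < d → d < M →
        (d ≤ c → σ d > i + 1) ∧ (c < d → σ d < i)) ↔
      ∃! j, m ≤ j ∧ j < M ∧ min (σ j) (σ (j + 1)) ≤ i ∧ i < max (σ j) (σ (j + 1)) := by
  simp only [min_le_and_lt_max_iff_xor, ← xor_not_not (a := σ _ ≤ i)]
  rw [← exists_cut_iff_existsUnique_flip (fun d => ¬ σ d ≤ i) (by omega) (by omega)]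
  refine exists_congr fun c => and_congr_right fun _ => and_congr_right fun _ =>
    forall_congr' fun d => forall_congr' fun hmd => forall_congr' fun hdM => ?_
  have hdm : σ d ≠ i + 1 := hm ▸ hσ.ne hmd.ne'
  have hdM : σ d ≠ i := hM ▸ hσ.ne hdM.ne
  omega

end Crossing

theorem stmt13_general (n : ℕ) (π : Equiv.Perm ℕ)
    (hπ : ∀ k ∈ Finset.Icc 1 (n+1), π k ∈ Finset.Icc 1 (n+1))
    (i : ℕ) (hi : i ∈ Finset.Icc 1 n) :
    (∃ c, min (π i) (π (i+1)) ≤ c ∧ c < max (π i) (π (i+1)) ∧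
      ∀ d, min (π i) (π (i+1)) < d → d < max (π i) (π (i+1)) →
        (π i < π (i+1) → (d ≤ c → π.symm d < i) ∧ (c < d → π.symm d > i + 1)) ∧
        (π (i+1) < π i → (d ≤ c → π.symm d > i + 1) ∧ (c < d → π.symm d < i))) ↔
    (∃! j, j ∈ Finset.Icc 1 n ∧ IsBox (⇑π) (⇑π.symm) i j) := by
  rw [Finset.mem_Icc] at hi
  have ha := Finset.mem_Icc.mp (hπ i (Finset.mem_Icc.mpr ⟨hi.1, by omega⟩))
  have hb := Finset.mem_Icc.mp (hπ (i + 1) (Finset.mem_Icc.mpr ⟨by omega, by omega⟩))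
  have hbox (j : ℕ) : j ∈ Finset.Icc 1 n ∧ IsBox π π.symm i j ↔ IsBox π π.symm i j :=
    and_iff_right_of_imp fun h => by
      rw [Finset.mem_Icc]
      unfold IsBox at h
      omega
  rw [existsUnique_congr hbox]
  simp only [IsBox]
  rcases lt_or_gt_of_ne (π.injective.ne (by omega : i ≠ i + 1)) with hlt | hgt
  · simp only [min_eq_left hlt.le, max_eq_right hlt.le, hlt, hlt.not_gt, true_implies,
      false_implies, and_true]
    exact exists_cut_iff_existsUnique_crossing_of_up π.symm.injective
      (π.symm_apply_apply i) (π.symm_apply_apply (i + 1))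
  · simp only [min_eq_right hgt.le, max_eq_left hgt.le, hgt, hgt.not_gt, true_implies,
      false_implies, true_and]
    exact exists_cut_iff_existsUnique_crossing_of_down π.symm.injective
      (π.symm_apply_apply (i + 1)) (π.symm_apply_apply i)

theorem stmt13 (n : ℕ) (hn : 1 ≤ n) (π : Equiv.Perm ℕ)
    (hπ : ∀ k ∈ Finset.Icc 1 (n+1), π k ∈ Finset.Icc 1 (n+1))
    (i : ℕ) (hi : i ∈ Finset.Icc 1 n) :
    (∃ c, min (π i) (π (i+1)) ≤ c ∧ c < max (π i) (π (i+1)) ∧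
      ∀ d, min (π i) (π (i+1)) < d → d < max (π i) (π (i+1)) →
        (π i < π (i+1) → (d ≤ c → π.symm d < i) ∧ (c < d → π.symm d > i + 1)) ∧
        (π (i+1) < π i → (d ≤ c → π.symm d > i + 1) ∧ (c < d → π.symm d < i))) ↔
    (∃! j, j ∈ Finset.Icc 1 n ∧ IsBox (⇑π) (⇑π.symm) i j) :=
  stmt13_general n π hπ i hi
end
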